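/- Assume the process type Proc is nonempty. For all words w and w' over Σ_δ: w ~_R w' if and only if π_p^δ(w) = π_p^δ(w') for every process p. (Projection characterisation of the trace equivalence over Σ_δ in which δ is dependent on every letter and two events are independent exactly when their processes are distinct.) -/

import Mathlib

variable {Op Proc : Type*}

abbrev Ev (Op Proc : Type*) := Op × Proc × Bool

def IsInv (e : Ev Op Proc) : Prop := e.2.2 = true

def EvMatches (e e' : Ev Op Proc) : Prop :=
  e.1 = e'.1 ∧ e.2.1 = e'.2.1 ∧ e.2.2 = true ∧ e'.2.2 = false

def proj [DecidableEq Proc] (p : Proc) (σ : List (Ev Op Proc)) : List (Ev Op Proc) :=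
  σ.filter (fun e => e.2.1 = p)

def SequentialRun (σ : List (Ev Op Proc)) : Prop :=
  σ = [] ∨
    ((∃ h : 0 < σ.length, IsInv (σ[0]'h)) ∧
     (∀ i, i % 2 = 0 → ∀ h : i + 1 < σ.length,
        EvMatches (σ[i]'(Nat.lt_of_succ_lt h)) (σ[i+1]'h)) ∧
     ((σ.length - 1) % 2 = 0 →
        ∃ h : σ.length - 1 < σ.length, IsInv (σ[σ.length - 1]'h)))

def Legal [DecidableEq Proc] (σ : List (Ev Op Proc)) : Prop :=
  ∀ p : Proc, SequentialRun (proj p σ)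

def Quiescent (σ : List (Ev Op Proc)) : Prop :=
  ∀ σ₁ (e : Ev Op Proc) σ₂, σ = σ₁ ++ e :: σ₂ → IsInv e → ∃ e' ∈ σ₂, EvMatches e e'

def ETEQ (σ : List (Ev Op Proc)) : Prop :=
  Quiescent σ ∧ ∀ u, u <+: σ → u ≠ [] → u ≠ σ → ¬ Quiescent u

/-- The alphabet Σ_δ: events together with a fresh quiescence symbol δ. -/
abbrev EvD (Op Proc : Type*) := Ev Op Proc ⊕ Unit

/-- One swap of two adjacent letters related by the independence relation I. -/
inductive SwapStep {A : Type*} (I : A → A → Prop) : List A → List A → Prop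
  | swap (u v : List A) (a b : A) : I a b → SwapStep I (u ++ a :: b :: v) (u ++ b :: a :: v)

/-- The independence relation R on Σ_δ: two Σ-events commute iff their processes differ
(δ commutes with nothing). -/
def IndepRD (x y : EvD Op Proc) : Prop :=
  ∃ a b : Ev Op Proc, x = Sum.inl a ∧ y = Sum.inl b ∧ a.2.1 ≠ b.2.1

/-- π_p^δ: keep all δ's and the events of process p. -/
def projD [DecidableEq Proc] (p : Proc) (w : List (EvD Op Proc)) : List (EvD Op Proc) :=
  w.filter (fun x => Sum.elim (fun e : Ev Op Proc => decide (e.2.1 = p)) (fun _ => true) x)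


/-!
This is the projection lemma of trace theory, for dependence (the complement of `I`) equal to the
union of the cliques `{a | f i a}`; here the cliques are the events of one process together
with `δ`. A swap of independent letters fixes every restriction, as no clique contains both.
Conversely, let all restrictions of `w = x :: t` and `w'` agree. Restricting to a clique of `x`
writes `w' = l₁ ++ x :: l₂` with `x ∉ l₁`. If a letter `c` of `l₁` were dependent on `x`, the
restriction to a clique containing both would begin with a letter of `l₁`, not with `x`. So
`x` commutes past `l₁` to the front of `w'`, and induction on `w` finishes the proof.
-/

open Relation

namespace SwapStep

variable {A : Type*} {I : A → A → Prop}

theorem cons (a : A) {l l' : List A} (h : SwapStep I l l') : SwapStep I (a :: l) (a :: l') := by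
  obtain ⟨u, v, x, y, hxy⟩ := h
  exact swap (a :: u) v x y hxy

theorem reflTransGen_cons (a : A) {l l' : List A} (h : ReflTransGen (SwapStep I) l l') :
    ReflTransGen (SwapStep I) (a :: l) (a :: l') :=
  h.lift (a :: ·) fun _ _ => cons a

theorem reflTransGen_cons_append (x : A) {u : List A} (hu : ∀ c ∈ u, I x c) (v : List A) :
    ReflTransGen (SwapStep I) (x :: (u ++ v)) (u ++ x :: v) := by
  induction u with
  | nil => exact .refl
  | cons c u ih =>
    have hswap : SwapStep I (x :: c :: (u ++ v)) (c :: x :: (u ++ v)) :=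
      swap [] (u ++ v) x c (hu c List.mem_cons_self)
    exact .head hswap (reflTransGen_cons c (ih fun d hd => hu d (List.mem_cons_of_mem c hd)))

theorem filter_eq {f : A → Bool} (hI : ∀ a b, I a b → f a = false ∨ f b = false)
    {l l' : List A} (h : SwapStep I l l') : l.filter f = l'.filter f := by
  obtain ⟨u, v, a, b, hab⟩ := h
  simp only [List.filter_append, List.filter_cons]
  rcases hI a b hab with ha | hb <;> simp [*]

theorem filter_eq_of_reflTransGen {f : A → Bool} (hI : ∀ a b, I a b → f a = false ∨ f b = false)
    {l l' : List A} (h : ReflTransGen (SwapStep I) l l') : l.filter f = l'.filter f := by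
  induction h with
  | refl => rfl
  | tail _ hstep ih => exact ih.trans (filter_eq hI hstep)

end SwapStep

theorem List.filter_eq_nil_of_filter_append_cons_eq_cons {A : Type*}
    {g : A → Bool} {x : A} {l₁ l₂ s : List A} (hx : x ∉ l₁)
    (h : (l₁ ++ x :: l₂).filter g = x :: s) (hgx : g x = true) :
    l₁.filter g = [] ∧ l₂.filter g = s := by
  rw [List.filter_append, List.filter_cons_of_pos hgx] at h
  cases hl : l₁.filter g with
  | nil => simpa [hl] using h
  | cons c r =>
    rw [hl, List.cons_append, List.cons.injEq] at h
    have hc : c ∈ l₁.filter g := hl ▸ List.mem_cons_self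
    exact absurd (List.mem_of_mem_filter (h.1 ▸ hc)) hx

section ProjectionLemma

variable {A ι : Type*} {I : A → A → Prop} {f : ι → A → Bool}

theorem reflTransGen_swapStep_of_forall_filter_eq (hirr : ∀ a, ¬ I a a)
    (hdep : ∀ a b, ¬ I a b → ∃ i, f i a = true ∧ f i b = true) {w w' : List A}
    (h : ∀ i, w.filter (f i) = w'.filter (f i)) : ReflTransGen (SwapStep I) w w' := by
  have hcover (a : A) : ∃ i, f i a = true := (hdep a a (hirr a)).imp fun _ h => h.1
  induction w generalizing w' with
  | nil =>
    rcases w' with _ | ⟨y, w'⟩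
    · exact .refl
    · obtain ⟨i, hi⟩ := hcover y
      simpa [List.filter_cons_of_pos hi] using h i
  | cons x t ih =>
    obtain ⟨i, hi⟩ := hcover x
    have hxi := h i
    rw [List.filter_cons_of_pos hi] at hxi
    obtain ⟨l₁, l₂, rfl, hl₁, -, -⟩ := List.filter_eq_cons_iff.mp hxi.symm
    have hx : x ∉ l₁ := fun hx => by simp [hl₁ x hx] at hi
    have hsplit (j : ι) (hj : f j x = true) :
        l₁.filter (f j) = [] ∧ l₂.filter (f j) = t.filter (f j) :=
      List.filter_eq_nil_of_filter_append_cons_eq_cons hx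
        ((h j).symm.trans (List.filter_cons_of_pos hj)) hj
    have hindep : ∀ c ∈ l₁, I x c := fun c hc => by
      by_contra hxc
      obtain ⟨j, hjx, hjc⟩ := hdep x c hxc
      simpa [hjc] using (List.filter_eq_nil_iff.mp (hsplit j hjx).1) c hc
    have htails (j : ι) : t.filter (f j) = (l₁ ++ l₂).filter (f j) := by
      by_cases hj : f j x = true
      · rw [List.filter_append, (hsplit j hj).1, (hsplit j hj).2, List.nil_append]
      · simpa [List.filter_cons, hj] using h j
    exact (SwapStep.reflTransGen_cons x (ih htails)).trans
      (SwapStep.reflTransGen_cons_append x hindep l₂)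

end ProjectionLemma

section Processes

variable [DecidableEq Proc]

def inProjD (p : Proc) : EvD Op Proc → Bool :=
  Sum.elim (fun e => decide (e.2.1 = p)) fun _ => true

theorem projD_eq_filter (p : Proc) (w : List (EvD Op Proc)) :
    projD p w = w.filter (inProjD p) := rfl

theorem inProjD_eq_false_of_indepRD {a b : EvD Op Proc} (h : IndepRD a b) (p : Proc) :
    inProjD p a = false ∨ inProjD p b = false := by
  obtain ⟨a, b, rfl, rfl, hab⟩ := h
  by_cases ha : a.2.1 = p
  · exact .inr (by simpa [inProjD, ← ha] using Ne.symm hab)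
  · exact .inl (by simpa [inProjD] using ha)

theorem exists_inProjD_of_not_indepRD [Nonempty Proc] {a b : EvD Op Proc}
    (h : ¬ IndepRD a b) : ∃ p, inProjD p a = true ∧ inProjD p b = true := by
  rcases a with a | _ <;> rcases b with b | _
  · have hab : a.2.1 = b.2.1 := by_contra fun hne => h ⟨a, b, rfl, rfl, hne⟩
    exact ⟨a.2.1, by simp [inProjD, hab]⟩
  · exact ⟨a.2.1, by simp [inProjD]⟩
  · exact ⟨b.2.1, by simp [inProjD]⟩
  · exact ⟨Classical.arbitrary Proc, by simp [inProjD]⟩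

end Processes

theorem not_indepRD_self (a : EvD Op Proc) : ¬ IndepRD a a := by
  rintro ⟨a, b, rfl, hb, hab⟩
  exact hab (by rw [Sum.inl_injective hb])

/-- w ~_R w' iff π_p^δ(w) = π_p^δ(w') for every process p. -/
theorem traceEquivRD_iff_projD_eq [DecidableEq Proc] [Nonempty Proc]
    (w w' : List (EvD Op Proc)) :
    Relation.ReflTransGen (SwapStep (IndepRD (Op := Op) (Proc := Proc))) w w' ↔
      ∀ p : Proc, projD p w = projD p w' := by
  simp only [projD_eq_filter]
  exact ⟨fun h p => SwapStep.filter_eq_of_reflTransGen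
      (fun _ _ hab => inProjD_eq_false_of_indepRD hab p) h,
    reflTransGen_swapStep_of_forall_filter_eq not_indepRD_self
      (fun _ _ => exists_inProjD_of_not_indepRD)⟩
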